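/- If θ is a Salem number, then θ^m is a Salem number for every positive integer m, and it has the same degree as θ. -/
import Mathlib

set_option synthInstance.maxHeartbeats 400000

/-- A Salem number: a real algebraic integer `θ > 1` whose Galois conjugates other than `θ`
all have absolute value `≤ 1`, with at least one conjugate of absolute value exactly `1`. -/
def IsSalem (θ : ℝ) : Prop :=
  1 < θ ∧ IsIntegral ℤ θ ∧
    (∀ z ∈ ((minpoly ℤ θ).map (algebraMap ℤ ℂ)).roots, z ≠ (θ : ℂ) → ‖z‖ ≤ 1) ∧
    ∃ z ∈ ((minpoly ℤ θ).map (algebraMap ℤ ℂ)).roots, ‖z‖ = 1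

open Polynomial IntermediateField

lemma salem_map_eq (θ : ℝ) (h : IsIntegral ℤ θ) :
    (minpoly ℤ θ).map (algebraMap ℤ ℂ) = (minpoly ℚ ((θ : ℂ))).map (algebraMap ℚ ℂ) := by
  have h1 : minpoly ℚ ((θ : ℂ)) = minpoly ℚ θ := by
    rw [show ((θ : ℂ)) = algebraMap ℝ ℂ θ from rfl]
    exact minpoly.algebraMap_eq (algebraMap ℝ ℂ).injective θ
  rw [h1, minpoly.isIntegrallyClosed_eq_field_fractions' ℚ h, Polynomial.map_map,
    ← IsScalarTower.algebraMap_eq]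

lemma salem_key (θ : ℝ) (h1 : 1 < θ) (hint : IsIntegral ℤ θ)
    (hb : ∀ z ∈ ((minpoly ℤ θ).map (algebraMap ℤ ℂ)).roots, z ≠ (θ : ℂ) → ‖z‖ ≤ 1)
    (m : ℕ) (hm : 0 < m) : ((θ : ℂ)) ∈ ℚ⟮((θ : ℂ)) ^ m⟯ := by
  set x : ℂ := (θ : ℂ) with hxdef
  have hxθ : IsIntegral ℚ θ := hint.tower_top
  have hx : IsIntegral ℚ x := hxθ.map (IsScalarTower.toAlgHom ℚ ℝ ℂ)
  set K := ℚ⟮x ^ m⟯ with hK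
  have hxint : IsIntegral K x := hx.tower_top
  have hbQ : ∀ z : ℂ, (Polynomial.aeval z) (minpoly ℚ x) = 0 → z ≠ x → ‖z‖ ≤ 1 := by
    intro z hz hne
    apply hb z _ hne
    rw [salem_map_eq θ hint]
    rw [mem_roots ((Polynomial.map_ne_zero_iff (algebraMap ℚ ℂ).injective).mpr
      (minpoly.ne_zero hx))]
    rw [IsRoot, eval_map, ← aeval_def]
    exact hz
  have hdvd1 : minpoly K x ∣ (X ^ m - C (AdjoinSimple.gen ℚ (x ^ m))) := by
    apply minpoly.dvd
    simp only [map_sub, map_pow, aeval_X, aeval_C]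
    rw [show (algebraMap K ℂ) (AdjoinSimple.gen ℚ (x ^ m)) = x ^ m from
      AdjoinSimple.algebraMap_gen ℚ (x ^ m)]
    ring
  have hdvd2 : minpoly K x ∣ (minpoly ℚ x).map (algebraMap ℚ K) := by
    apply minpoly.dvd
    rw [aeval_map_algebraMap]
    exact minpoly.aeval ℚ x
  have hne : minpoly K x ≠ 0 := minpoly.ne_zero hxint
  set r := (minpoly K x).map (algebraMap K ℂ) with hr
  have hrne : r ≠ 0 := (Polynomial.map_ne_zero_iff (algebraMap K ℂ).injective).mpr hne
  have hallx : ∀ z ∈ r.roots, z = x := by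
    intro z hz
    have hz0 : eval z r = 0 := (mem_roots hrne).mp hz
    have hzm : z ^ m = x ^ m := by
      have hd : r ∣ (X ^ m - C (x ^ m)) := by
        have h2 := Polynomial.map_dvd (algebraMap K ℂ) hdvd1
        simpa [Polynomial.map_pow, AdjoinSimple.algebraMap_gen] using h2
      obtain ⟨c, hc⟩ := hd
      have h3 : eval z (X ^ m - C (x ^ m)) = 0 := by rw [hc, eval_mul, hz0, zero_mul]
      simp only [eval_sub, eval_pow, eval_X, eval_C, sub_eq_zero] at h3
      exact h3
    have hzp : (Polynomial.aeval z) (minpoly ℚ x) = 0 := by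
      have hd : r ∣ (minpoly ℚ x).map (algebraMap ℚ ℂ) := by
        have h2 := Polynomial.map_dvd (algebraMap K ℂ) hdvd2
        rwa [Polynomial.map_map, ← IsScalarTower.algebraMap_eq] at h2
      obtain ⟨c, hc⟩ := hd
      rw [aeval_def, ← eval_map, hc, eval_mul, hz0, zero_mul]
    by_contra hzx
    have hle := hbQ z hzp hzx
    have hxn : ‖x‖ = θ := by
      rw [hxdef, Complex.norm_real, Real.norm_eq_abs, abs_of_pos (by linarith)]
    have hnz : ‖z‖ = θ := by
      have h4 : ‖z‖ ^ m = θ ^ m := by rw [← norm_pow, hzm, norm_pow, hxn]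
      have := (pow_left_strictMonoOn₀ hm.ne').injOn (norm_nonneg z)
        (le_of_lt (lt_trans one_pos h1)) h4
      simpa using this
    linarith
  -- separable ⇒ nodup roots; all roots equal x ⇒ card ≤ 1
  have hsep : (minpoly K x).Separable := (minpoly.irreducible hxint).separable
  have hnodup : r.roots.Nodup := nodup_roots hsep.map
  have hcard : r.roots.card = (minpoly K x).natDegree := by
    rw [hr, ← natDegree_map_eq_of_injective (algebraMap K ℂ).injective]
    exact (splits_iff_card_roots.mp (IsAlgClosed.splits _))
  have hd1 : (minpoly K x).natDegree = 1 := by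
    have hpos : 0 < (minpoly K x).natDegree := minpoly.natDegree_pos hxint
    have hle1 : r.roots.card ≤ 1 := by
      rw [← Multiset.toFinset_card_of_nodup hnodup]
      have : r.roots.toFinset ⊆ {x} := by
        intro z hz
        simp only [Finset.mem_singleton]
        exact hallx z (Multiset.mem_toFinset.mp hz)
      simpa using Finset.card_le_card this
    omega
  have := minpoly.natDegree_eq_one_iff.mp hd1
  obtain ⟨k, hk⟩ := this
  rw [← hk]
  exact k.2


theorem salem_pow_is_salem (θ : ℝ) (hθ : IsSalem θ) (m : ℕ) (hm : 0 < m) :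
    IsSalem (θ ^ m) ∧ (minpoly ℤ (θ ^ m)).natDegree = (minpoly ℤ θ).natDegree := by
  obtain ⟨h1, hint, hb, hex⟩ := hθ
  set x : ℂ := (θ : ℂ) with hxdef
  have hxθ : IsIntegral ℚ θ := hint.tower_top
  have hx : IsIntegral ℚ x := hxθ.map (IsScalarTower.toAlgHom ℚ ℝ ℂ)
  have hintm : IsIntegral ℤ (θ ^ m) := hint.pow m
  have hxm : IsIntegral ℚ (x ^ m) := hx.pow m
  have hcast : ((θ ^ m : ℝ) : ℂ) = x ^ m := by push_cast; rfl
  have hmap : (minpoly ℤ θ).map (algebraMap ℤ ℂ) = (minpoly ℚ x).map (algebraMap ℚ ℂ) :=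
    salem_map_eq θ hint
  have hmapm : (minpoly ℤ (θ ^ m)).map (algebraMap ℤ ℂ)
      = (minpoly ℚ (x ^ m)).map (algebraMap ℚ ℂ) := by
    rw [salem_map_eq (θ ^ m) hintm, hcast]
  have hmem : x ∈ ℚ⟮x ^ m⟯ := salem_key θ h1 hint hb m hm
  have hQne : minpoly ℚ (x ^ m) ≠ 0 := minpoly.ne_zero hxm
  have hPne : minpoly ℚ x ≠ 0 := minpoly.ne_zero hx
  -- membership translations
  have hmemm : ∀ z : ℂ, z ∈ ((minpoly ℤ (θ ^ m)).map (algebraMap ℤ ℂ)).roots ↔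
      (Polynomial.aeval z) (minpoly ℚ (x ^ m)) = 0 := by
    intro z
    rw [hmapm, mem_roots ((Polynomial.map_ne_zero_iff (algebraMap ℚ ℂ).injective).mpr hQne),
      IsRoot, eval_map, ← aeval_def]
  have hmem1 : ∀ z : ℂ, z ∈ ((minpoly ℤ θ).map (algebraMap ℤ ℂ)).roots ↔
      (Polynomial.aeval z) (minpoly ℚ x) = 0 := by
    intro z
    rw [hmap, mem_roots ((Polynomial.map_ne_zero_iff (algebraMap ℚ ℂ).injective).mpr hPne),
      IsRoot, eval_map, ← aeval_def]
  constructor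
  · refine ⟨one_lt_pow₀ h1 hm.ne', hintm, ?_, ?_⟩
    · -- bound on conjugates of θ^m
      intro w hw hwne
      have hwQ : (Polynomial.aeval w) (minpoly ℚ (x ^ m)) = 0 := (hmemm w).mp hw
      have hwar : w ∈ (minpoly ℚ (x ^ m)).aroots ℂ :=
        Polynomial.mem_aroots.mpr ⟨hQne, hwQ⟩
      set σ := (algHomAdjoinIntegralEquiv ℚ hxm).symm ⟨w, hwar⟩ with hσ
      have hgen : σ (AdjoinSimple.gen ℚ (x ^ m)) = w :=
        algHomAdjoinIntegralEquiv_symm_apply_gen ℚ hxm ⟨w, hwar⟩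
      set ξ : ℚ⟮x ^ m⟯ := ⟨x, hmem⟩ with hξ
      have hξm : ξ ^ m = AdjoinSimple.gen ℚ (x ^ m) := by
        apply Subtype.ext
        push_cast
        rfl
      have hwe : (σ ξ) ^ m = w := by rw [← map_pow, hξm, hgen]
      have hroot : (Polynomial.aeval (σ ξ)) (minpoly ℚ x) = 0 := by
        have hζ : (Polynomial.aeval ξ) (minpoly ℚ x) = 0 := by
          apply (algebraMap (ℚ⟮x ^ m⟯) ℂ).injective
          rw [map_zero, ← Polynomial.aeval_algebraMap_apply]
          exact minpoly.aeval ℚ x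
        rw [Polynomial.aeval_algHom_apply, hζ, map_zero]
      have hne : σ ξ ≠ x := by
        intro h
        apply hwne
        rw [hcast, ← hwe, h]
      have := hb (σ ξ) ((hmem1 (σ ξ)).mpr hroot) hne
      rw [← hwe, norm_pow]
      exact pow_le_one₀ (norm_nonneg _) this
    · -- existence of a conjugate of modulus one
      obtain ⟨z, hz, hz1⟩ := hex
      have hzQ : (Polynomial.aeval z) (minpoly ℚ x) = 0 := (hmem1 z).mp hz
      have hdvd : minpoly ℚ x ∣ (minpoly ℚ (x ^ m)).comp (X ^ m) := by
        apply minpoly.dvd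
        rw [aeval_comp]
        simp only [map_pow, aeval_X]
        exact minpoly.aeval ℚ (x ^ m)
      refine ⟨z ^ m, (hmemm (z ^ m)).mpr ?_, by rw [norm_pow, hz1, one_pow]⟩
      obtain ⟨c, hc⟩ := hdvd
      have h0 : (Polynomial.aeval z) ((minpoly ℚ (x ^ m)).comp (X ^ m)) = 0 := by
        rw [hc, map_mul, hzQ, zero_mul]
      rwa [aeval_comp, map_pow, aeval_X] at h0
  · -- degree equality
    have hfe : ℚ⟮x ^ m⟯ = ℚ⟮x⟯ := by
      apply le_antisymm
      · exact adjoin_simple_le_iff.mpr (pow_mem (mem_adjoin_simple_self ℚ x) m)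
      · exact adjoin_simple_le_iff.mpr hmem
    have hf1 : Module.finrank ℚ ℚ⟮x ^ m⟯ = (minpoly ℚ (x ^ m)).natDegree :=
      adjoin.finrank hxm
    have hf2 : Module.finrank ℚ ℚ⟮x⟯ = (minpoly ℚ x).natDegree := adjoin.finrank hx
    have hQdeg : (minpoly ℚ (x ^ m)).natDegree = (minpoly ℚ x).natDegree := by
      rw [← hf1, ← hf2, hfe]
    have e1 : (minpoly ℤ (θ ^ m)).natDegree = (minpoly ℚ (x ^ m)).natDegree := by
      rw [← hcast, show ((θ ^ m : ℝ) : ℂ) = algebraMap ℝ ℂ (θ ^ m) from rfl,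
        minpoly.algebraMap_eq (algebraMap ℝ ℂ).injective,
        minpoly.isIntegrallyClosed_eq_field_fractions' ℚ hintm,
        natDegree_map_eq_of_injective (algebraMap ℤ ℚ).injective_int]
    have e2 : (minpoly ℤ θ).natDegree = (minpoly ℚ x).natDegree := by
      rw [hxdef, show ((θ : ℝ) : ℂ) = algebraMap ℝ ℂ θ from rfl,
        minpoly.algebraMap_eq (algebraMap ℝ ℂ).injective,
        minpoly.isIntegrallyClosed_eq_field_fractions' ℚ hint,
        natDegree_map_eq_of_injective (algebraMap ℤ ℚ).injective_int]
    rw [e1, e2, hQdeg]
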